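/- Let $s_0 \in \{0, \dots, p_0 - 1\}$, $L \ge 1$, and let $a$ be uniform on $\{0, \dots, L-1\}$. Let $P$ be a positive integer coprime to $p_0$ with $P \le L$. Then the statistical distance between the distribution of $(s_0 + a p_0) \bmod P$ and the uniform distribution on $\{0, \dots, P - 1\}$ is at most $P / L$. -/

import Mathlib

/-!
Since `p₀` is invertible modulo `P`, the condition `(s₀ + a p₀) mod P = r` pins down a single
residue class of `a` modulo `P`. Among `0, …, L - 1` every residue class has `⌊L / P⌋` or
`⌊L / P⌋ + 1` elements, so each of the `P` terms of the distance is at most `1 / L`.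
-/

open Finset

theorem Nat.abs_count_modEq_mul_sub_le {b r : ℕ} (hr : 0 < r) (v : ℕ) :
    |(b.count (· ≡ v [MOD r]) : ℚ) * r - b| ≤ r := by
  have hdiv : (b : ℚ) = r * (b / r : ℕ) + (b % r : ℕ) := by
    exact_mod_cast (Nat.div_add_mod b r).symm
  have hmod : ((b % r : ℕ) : ℚ) < r := by exact_mod_cast Nat.mod_lt b hr
  rw [Nat.count_modEq_card b hr, abs_le]
  split_ifs <;> push_cast <;> constructor <;> nlinarith [(b % r).cast_nonneg (α := ℚ)]

theorem Nat.abs_count_modEq_div_sub_le {b r : ℕ} (hb : 0 < b) (hr : 0 < r) (v : ℕ) :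
    |(b.count (· ≡ v [MOD r]) : ℚ) / b - 1 / r| ≤ 1 / b := by
  have hbr : (0 : ℚ) < b * r := by positivity
  calc |(b.count (· ≡ v [MOD r]) : ℚ) / b - 1 / r|
      = |(b.count (· ≡ v [MOD r]) : ℚ) * r - b| / (b * r) := by
        rw [← abs_of_pos hbr, ← abs_div]
        congr 1
        field_simp
    _ ≤ r / (b * r) := by gcongr; exact Nat.abs_count_modEq_mul_sub_le hr v
    _ = 1 / b := by field_simp

theorem Nat.exists_add_mul_modEq_iff {P p : ℕ} [NeZero P] (hcop : P.Coprime p) (s r : ℕ) :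
    ∃ c, ∀ a, s + a * p ≡ r [MOD P] ↔ a ≡ c [MOD P] := by
  let u := ZMod.unitOfCoprime p hcop.symm
  refine ⟨(((r : ZMod P) - s) * ↑u⁻¹).val, fun a => ?_⟩
  rw [← ZMod.natCast_eq_natCast_iff, ← ZMod.natCast_eq_natCast_iff, ZMod.natCast_zmod_val,
    Units.eq_mul_inv_iff_mul_eq, ZMod.coe_unitOfCoprime, eq_sub_iff_add_eq']
  push_cast
  rfl

theorem crt_privacy_statistical_distance_general (p₀ s₀ L P : ℕ)
    (hL : 1 ≤ L)
    (hcop : Nat.Coprime P p₀) :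
    (1 / 2 : ℚ) *
        ∑ r ∈ Finset.range P,
          |(((Finset.range L).filter
              (fun a => (s₀ + a * p₀) % P = r)).card : ℚ) / L - 1 / P| ≤
      (P : ℚ) / L := by
  have hterm : ∀ r ∈ range P,
      |(((range L).filter (fun a => (s₀ + a * p₀) % P = r)).card : ℚ) / L - 1 / P| ≤ 1 / L := by
    intro r hr
    have hrP : r < P := mem_range.1 hr
    have : NeZero P := ⟨by omega⟩
    obtain ⟨c, hc⟩ := Nat.exists_add_mul_modEq_iff hcop s₀ r
    have hfiber : (range L).filter (fun a => (s₀ + a * p₀) % P = r) =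
        (range L).filter (· ≡ c [MOD P]) :=
      filter_congr fun a _ => by rw [← hc a, Nat.ModEq, Nat.mod_eq_of_lt hrP]
    rw [hfiber, ← Nat.count_eq_card_filter_range]
    exact Nat.abs_count_modEq_div_sub_le hL (by omega) c
  have hsum := sum_le_card_nsmul _ _ _ hterm
  rw [card_range, nsmul_eq_mul, mul_one_div] at hsum
  have hnonneg : (0 : ℚ) ≤ P / L := by positivity
  linarith

theorem crt_privacy_statistical_distance (p₀ s₀ L P : ℕ)
    (hs₀ : s₀ < p₀) (hL : 1 ≤ L) (hP : 0 < P)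
    (hcop : Nat.Coprime P p₀) (hPL : P ≤ L) :
    (1 / 2 : ℚ) *
        ∑ r ∈ Finset.range P,
          |(((Finset.range L).filter
              (fun a => (s₀ + a * p₀) % P = r)).card : ℚ) / L - 1 / P| ≤
      (P : ℚ) / L :=
  crt_privacy_statistical_distance_general p₀ s₀ L P hL hcop
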